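/- arXiv:2104.09180 — 2 statements merged into one kernel-verified Lean document; each statement's English description precedes it below -/
import Mathlib

section
/- Let w, e ∈ ZMod p and c := h^w. The distribution of honestly generated accepting Schnorr transcripts with challenge e equals the simulated distribution: PMF.map (fun k => (h^k, k + e·w)) (uniform on ZMod p) = PMF.map (fun z => (h^z · c^{-e}, z)) (uniform on ZMod p), where each pair records (commitment, response). (Perfect honest-verifier zero knowledge of the Schnorr protocol: the simulator that picks z uniformly and sets a := h^z · c^{-e} produces transcripts identically distributed to real ones.) -/
/-! Translating the response by `e * w` is a bijection of `ZMod p`, so it preserves the uniform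
distribution; and since `h ^ p = 1`, exponentiation `k ↦ h ^ k.val` turns that translation into
multiplication by `h ^ (e * w).val = c ^ e.val`. Hence the real transcript of `k` is the simulated
transcript of `z = k + e * w`. -/

theorem PMF.map_equiv_uniformOfFintype {α β : Type*} [Fintype α] [Nonempty α] [Fintype β]
    [Nonempty β] (σ : α ≃ β) :
    PMF.map σ (PMF.uniformOfFintype α) = PMF.uniformOfFintype β := by
  ext b
  rw [PMF.map_apply, tsum_eq_single (σ.symm b) fun a ha => if_neg fun hb => ha (by simp [hb])]
  simp [Fintype.card_congr σ]

section PowZModVal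

variable {M : Type*} [Monoid M] {n : ℕ} {x : M}

theorem pow_zmod_val_add [NeZero n] (hx : x ^ n = 1) (a b : ZMod n) :
    x ^ (a + b).val = x ^ a.val * x ^ b.val := by
  rw [ZMod.val_add, ← pow_eq_pow_mod _ hx, pow_add]

theorem pow_zmod_val_mul (hx : x ^ n = 1) (a b : ZMod n) :
    x ^ (a * b).val = (x ^ a.val) ^ b.val := by
  rw [ZMod.val_mul, ← pow_eq_pow_mod _ hx, pow_mul]

end PowZModVal

/-- Perfect honest-verifier zero knowledge of the Schnorr protocol: real
transcripts `(h^k, k + e·w)` for uniform `k` are distributed identically to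
simulated transcripts `(h^z · c^{-e}, z)` for uniform `z`. -/
theorem schnorr_hvzk {p : ℕ} [Fact p.Prime] {G : Type*} [CommGroup G]
    [Fintype G] (hG : Fintype.card G = p) (h : G)
    (w e : ZMod p) (c : G) (hc : c = h ^ w.val) :
    PMF.map (fun k : ZMod p => ((h ^ k.val, k + e * w) : G × ZMod p))
        (PMF.uniformOfFintype (ZMod p))
      = PMF.map (fun z : ZMod p => ((h ^ z.val * (c ^ e.val)⁻¹, z) : G × ZMod p))
        (PMF.uniformOfFintype (ZMod p)) := by
  have hp : h ^ p = 1 := hG ▸ pow_card_eq_one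
  have hce : c ^ e.val = h ^ (e * w).val := by rw [hc, ← pow_zmod_val_mul hp, mul_comm]
  have real_eq_simulated_shift :
      (fun k : ZMod p => ((h ^ k.val, k + e * w) : G × ZMod p)) =
        (fun z : ZMod p => ((h ^ z.val * (c ^ e.val)⁻¹, z) : G × ZMod p)) ∘
          Equiv.addRight (e * w) := by
    funext k
    simp [hce, pow_zmod_val_add hp]
  rw [real_eq_simulated_shift, ← PMF.map_comp, PMF.map_equiv_uniformOfFintype]
end

section
/- Let n, ℓ ∈ ℕ. Let v : Fin n → ZMod p be input values, r : Fin n → ZMod p input randomness, b : Fin n → Fin ℓ → ℕ output bits with b j k ≤ 1 for all j, k, and s : Fin n → Fin ℓ → ZMod p bit-commitment randomness. Define input coins coin_j := g^{v j} · h^{r j}, output coins coin'_j := ∏_k (g^{b j k} · h^{s j k})^{2^k}, and t := ∑_j (∑_k (2^k : ZMod p) · s j k − r j). If ∑_j v j = ∑_j ((∑_k b j k · 2^k : ℕ) : ZMod p) in ZMod p, then ∏_j coin'_j = (∏_j coin_j) · h^t. (Correctness of the PSC finalization check: for an honest execution satisfying the zero-sum constraint, the combined randomness t is a discrete logarithm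 in base h of the coin quotient, so the Schnorr proof computed in the MPC program verifies.) -/
/-!
In a group of order `p`, `u ^ a` depends only on `a mod p`, so `(x, r) ↦ g ^ x * h ^ r` is a
homomorphism from `ZMod p × ZMod p`. Each output coin is therefore the commitment to the value
`∑ₖ 2ᵏ bₖ` with randomness `∑ₖ 2ᵏ sₖ`; multiplying out, the `g`-exponents of both sides agree by the
zero-sum constraint, and the `h`-exponents differ exactly by `t`.
-/

open Finset

section CardEq

variable {G : Type*} [Group G] [Fintype G]

theorem pow_eq_pow_of_natCast_eq (u : G) {a b : ℕ} (hab : (a : ZMod (Fintype.card G)) = b) :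
    u ^ a = u ^ b := by
  rw [pow_eq_pow_iff_modEq]
  exact ((ZMod.natCast_eq_natCast_iff _ _ _).mp hab).of_dvd orderOf_dvd_card

theorem pow_val_natCast (u : G) (a : ℕ) : u ^ (a : ZMod (Fintype.card G)).val = u ^ a :=
  pow_eq_pow_of_natCast_eq u (by simp)

theorem pow_val_add (u : G) (a b : ZMod (Fintype.card G)) :
    u ^ (a + b).val = u ^ a.val * u ^ b.val := by
  rw [← pow_add]
  exact pow_eq_pow_of_natCast_eq u (by simp)

theorem pow_val_pow (u : G) (a : ZMod (Fintype.card G)) (m : ℕ) :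
    (u ^ a.val) ^ m = u ^ ((m : ZMod (Fintype.card G)) * a).val := by
  rw [← pow_mul]
  exact pow_eq_pow_of_natCast_eq u (by simp [mul_comm])

end CardEq

def pedersen {G : Type*} [Monoid G] {p : ℕ} (g h : G) (x r : ZMod p) : G :=
  g ^ x.val * h ^ r.val

section Pedersen

variable {G : Type*} [CommGroup G] [Fintype G] (g h : G)

theorem pedersen_add (x r x' r' : ZMod (Fintype.card G)) :
    pedersen g h (x + x') (r + r') = pedersen g h x r * pedersen g h x' r' := by
  simp only [pedersen, pow_val_add]
  ac_rfl

theorem pedersen_pow (x r : ZMod (Fintype.card G)) (m : ℕ) :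
    pedersen g h x r ^ m = pedersen g h ((m : ZMod (Fintype.card G)) * x) (m * r) := by
  simp only [pedersen, mul_pow, pow_val_pow]

theorem prod_pedersen {ι : Type*} (s : Finset ι) (x r : ι → ZMod (Fintype.card G)) :
    ∏ i ∈ s, pedersen g h (x i) (r i) = pedersen g h (∑ i ∈ s, x i) (∑ i ∈ s, r i) := by
  classical
  induction s using Finset.induction_on with
  | empty => simp [pedersen]
  | insert i s hi ih => rw [prod_insert hi, sum_insert hi, sum_insert hi, ih, pedersen_add]

theorem pedersen_mul_pow_val (x r t : ZMod (Fintype.card G)) :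
    pedersen g h x r * h ^ t.val = pedersen g h x (r + t) := by
  rw [pedersen, pedersen, pow_val_add, mul_assoc]

end Pedersen

theorem psc_finalization_correct_general {p : ℕ} {G : Type*} [CommGroup G]
    [Fintype G] (hG : Fintype.card G = p) (g h : G)
    (n ℓ : ℕ) (v : Fin n → ZMod p) (r : Fin n → ZMod p)
    (b : Fin n → Fin ℓ → ℕ)
    (s : Fin n → Fin ℓ → ZMod p)
    (coin : Fin n → G) (hcoin : ∀ j, coin j = g ^ (v j).val * h ^ (r j).val)
    (coin' : Fin n → G)
    (hcoin' : ∀ j, coin' j = ∏ k : Fin ℓ, (g ^ (b j k) * h ^ (s j k).val) ^ (2 ^ (k : ℕ)))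
    (t : ZMod p)
    (ht : t = ∑ j, ((∑ k : Fin ℓ, (2 ^ (k : ℕ) : ZMod p) * s j k) - r j))
    (hsum : (∑ j, v j)
      = ∑ j, (((∑ k : Fin ℓ, b j k * 2 ^ (k : ℕ) : ℕ) : ZMod p))) :
    (∏ j, coin' j) = (∏ j, coin j) * h ^ t.val := by
  subst hG
  have hin : ∏ j, coin j = pedersen g h (∑ j, v j) (∑ j, r j) := by
    simp only [hcoin]
    exact prod_pedersen g h _ v r
  have hout : ∀ j, coin' j = pedersen g h (∑ k : Fin ℓ, 2 ^ (k : ℕ) * (b j k : ZMod _))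
      (∑ k : Fin ℓ, 2 ^ (k : ℕ) * s j k) := fun j => calc
    coin' j = ∏ k : Fin ℓ, pedersen g h (b j k : ZMod _) (s j k) ^ 2 ^ (k : ℕ) := by
      simp only [hcoin', pedersen, pow_val_natCast]
    _ = _ := by simp only [pedersen_pow, prod_pedersen, Nat.cast_pow, Nat.cast_ofNat]
  rw [hin, pedersen_mul_pow_val, hsum, ht, ← sum_add_distrib]
  simp only [hout, prod_pedersen, add_sub_cancel]
  congr 1
  push_cast
  exact sum_congr rfl fun j _ => sum_congr rfl fun k _ => mul_comm _ _

/-- Correctness of the PSC finalization check: for an honest execution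
satisfying the zero-sum constraint, the combined randomness `t` is a discrete
logarithm in base `h` of the coin quotient. -/
theorem psc_finalization_correct {p : ℕ} [Fact p.Prime] {G : Type*} [CommGroup G]
    [Fintype G] (hG : Fintype.card G = p) (g h : G)
    (n ℓ : ℕ) (v : Fin n → ZMod p) (r : Fin n → ZMod p)
    (b : Fin n → Fin ℓ → ℕ) (hb : ∀ j k, b j k ≤ 1)
    (s : Fin n → Fin ℓ → ZMod p)
    (coin : Fin n → G) (hcoin : ∀ j, coin j = g ^ (v j).val * h ^ (r j).val)
    (coin' : Fin n → G)
    (hcoin' : ∀ j, coin' j = ∏ k : Fin ℓ, (g ^ (b j k) * h ^ (s j k).val) ^ (2 ^ (k : ℕ)))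
    (t : ZMod p)
    (ht : t = ∑ j, ((∑ k : Fin ℓ, (2 ^ (k : ℕ) : ZMod p) * s j k) - r j))
    (hsum : (∑ j, v j)
      = ∑ j, (((∑ k : Fin ℓ, b j k * 2 ^ (k : ℕ) : ℕ) : ZMod p))) :
    (∏ j, coin' j) = (∏ j, coin j) * h ^ t.val :=
  psc_finalization_correct_general hG g h n ℓ v r b s coin hcoin coin' hcoin' t ht hsum
end
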